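/- arXiv:alg-geom/9704017 — 8 statements merged into one kernel-verified Lean document; each statement's English description precedes it below -/
import Mathlib

section
/- Let R be a commutative reduced Noetherian ring and I an ideal of R containing a nonzerodivisor f. Then for every φ ∈ Hom_R(I,I), the element φ(f)/f of the total quotient ring of R is integral over R. -/
/-!
An `R`-linear endomorphism `φ` of `I` satisfies `a * φ f = f * φ a` for `a ∈ I`, so
`h = φ(f)/f` sends the image of `a` in `Frac(R)` to that of `φ a`. Thus `h` stabilises the
image of `I`, a finitely generated `R`-module containing the unit `f`, and Cayley–Hamilton for
multiplication by `h` on it gives a monic `p` with `p(h) * f = 0`, i.e. `p(h) = 0`.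
-/

open Polynomial

section DeterminantTrick

variable {R A : Type*} [CommRing R] [CommRing A] [Algebra R A]

theorem aeval_restrict_mulLeft_apply (N : Submodule R A) {x : A} (hx : ∀ n ∈ N, x * n ∈ N)
    (p : R[X]) (n : N) :
    ((aeval ((LinearMap.mulLeft R x).restrict hx) p n : N) : A) = aeval x p * n := by
  induction p using Polynomial.induction_on generalizing n with
  | C a => simp [Algebra.smul_def]
  | add p q hp hq => simp [hp, hq, add_mul]
  | monomial k a ih =>
    rw [pow_succ, ← mul_assoc, map_mul, Module.End.mul_apply, ih, aeval_X,
      map_mul (aeval x) (C a * X ^ k) X, aeval_X, mul_assoc]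
    rfl

theorem isIntegral_of_mul_mem_of_isUnit_mem (N : Submodule R A) (hN : N.FG) {x u : A}
    (hx : ∀ n ∈ N, x * n ∈ N) (hu : u ∈ N) (hunit : IsUnit u) : IsIntegral R x := by
  have : Module.Finite R N := .of_fg hN
  obtain ⟨p, hmonic, hp⟩ :=
    LinearMap.exists_monic_and_aeval_eq_zero R ((LinearMap.mulLeft R x).restrict hx)
  refine ⟨p, hmonic, ?_⟩
  have hpu := aeval_restrict_mulLeft_apply N hx p ⟨u, hu⟩
  rw [hp] at hpu
  exact hunit.mul_left_eq_zero.mp (by simpa [eq_comm, aeval_def] using hpu)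

end DeterminantTrick

section IdealEndomorphism

variable {R : Type*} [CommRing R] {I : Ideal R}

theorem Ideal.coe_mul_apply_comm (φ : Module.End R I) (a b : I) :
    (a : R) * φ b = b * φ a := by
  have hab : (a : R) • b = (b : R) • a := Subtype.ext (mul_comm (a : R) b)
  simpa only [map_smul, Submodule.coe_smul, smul_eq_mul] using
    congr_arg Subtype.val (congr_arg φ hab)

theorem mul_algebraMap_eq_algebraMap_apply {S : Type*} [CommRing S] [Algebra R S]
    (φ : Module.End R I) {f : I} (hf : IsUnit (algebraMap R S f)) {h : S}
    (hh : h * algebraMap R S f = algebraMap R S (φ f)) (a : I) :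
    h * algebraMap R S a = algebraMap R S (φ a) := by
  apply hf.mul_left_injective
  calc h * algebraMap R S a * algebraMap R S f
      = algebraMap R S a * (h * algebraMap R S f) := by ring
    _ = algebraMap R S ((a : R) * φ f) := by rw [hh, map_mul]
    _ = algebraMap R S (φ a) * algebraMap R S f := by
      rw [Ideal.coe_mul_apply_comm, map_mul, mul_comm]

end IdealEndomorphism

theorem stmt_1_general (R : Type*) [CommRing R] [IsNoetherianRing R]
    (I : Ideal R) (f : R) (hfI : f ∈ I) (hf : f ∈ nonZeroDivisors R)
    (φ : Module.End R I) (h : FractionRing R)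
    (hh : h * algebraMap R (FractionRing R) f
        = algebraMap R (FractionRing R) ((φ ⟨f, hfI⟩ : I) : R)) :
    IsIntegral R h := by
  let N : Submodule R (FractionRing R) := Submodule.map (Algebra.linearMap R (FractionRing R)) I
  have hfu : IsUnit (algebraMap R (FractionRing R) f) := IsLocalization.map_units _ ⟨f, hf⟩
  have hstab : ∀ n ∈ N, h * n ∈ N := by
    rintro _ ⟨a, ha, rfl⟩
    exact ⟨φ ⟨a, ha⟩, (φ ⟨a, ha⟩).2,
      (mul_algebraMap_eq_algebraMap_apply φ (f := ⟨f, hfI⟩) hfu hh ⟨a, ha⟩).symm⟩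
  exact isIntegral_of_mul_mem_of_isUnit_mem N ((IsNoetherian.noetherian I).map _) hstab
    ⟨f, hfI, rfl⟩ hfu

/-- For `φ ∈ Hom_R(I,I)` and a nonzerodivisor `f ∈ I`, the element `φ(f)/f` of the
total quotient ring is integral over `R`. -/
theorem stmt_1 (R : Type*) [CommRing R] [IsNoetherianRing R] [IsReduced R]
    (I : Ideal R) (f : R) (hfI : f ∈ I) (hf : f ∈ nonZeroDivisors R)
    (φ : Module.End R I) (h : FractionRing R)
    (hh : h * algebraMap R (FractionRing R) f
        = algebraMap R (FractionRing R) ((φ ⟨f, hfI⟩ : I) : R)) :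
    IsIntegral R h :=
  stmt_1_general R I f hfI hf φ h hh
end

section
/- Let R be a commutative reduced ring, I a radical ideal of R, and h an element of the total quotient ring of R that is integral over R. If h·I ⊆ R, then h·I ⊆ I. -/
/-- If `I` is a radical ideal of a reduced ring `R`, `h ∈ Frac(R)` is integral over `R`
and `h·I ⊆ R`, then `h·I ⊆ I`. -/
theorem stmt_2 (R : Type*) [CommRing R] [IsReduced R]
    (I : Ideal R) (hrad : I.IsRadical) (h : FractionRing R) (hint : IsIntegral R h)
    (hIR : ∀ a ∈ I, h * algebraMap R (FractionRing R) a
        ∈ Set.range (algebraMap R (FractionRing R))) :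
    ∀ a ∈ I, ∃ b ∈ I, h * algebraMap R (FractionRing R) a
        = algebraMap R (FractionRing R) b := by
  intro a ha
  obtain ⟨b, hb⟩ := hIR a ha
  refine ⟨b, ?_, hb.symm⟩
  set f := algebraMap R (FractionRing R) with hf
  have hinj : Function.Injective f := IsFractionRing.injective R (FractionRing R)
  obtain ⟨p, hmonic, hp⟩ := hint
  set n := p.natDegree with hn
  have haev : Polynomial.aeval h p = 0 := by rwa [Polynomial.aeval_def]
  rcases Nat.eq_zero_or_pos n with h0 | hpos
  · have hp1 : p = 1 := Polynomial.eq_one_of_monic_natDegree_zero hmonic h0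
    have h10 : (1 : FractionRing R) = 0 := by
      rw [hp1] at haev; simpa using haev
    have h10' : (1 : R) = 0 := hinj (by simpa using h10)
    have hb0 : b = 0 := by
      calc b = b * 1 := (mul_one b).symm
      _ = 0 := by rw [h10', mul_zero]
    rw [hb0]; exact I.zero_mem
  · apply hrad ⟨n, ?_⟩
    have hhn : h ^ n = - ∑ i ∈ Finset.range n, f (p.coeff i) * h ^ i := by
      have hs := Polynomial.aeval_eq_sum_range (R := R) (p := p) (x := h)
      rw [haev, Finset.sum_range_succ, hmonic.coeff_natDegree, one_smul, eq_comm,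
        ← neg_eq_iff_add_eq_zero] at hs
      rw [← hn] at hs
      rw [← hs]
      congr 1
      apply Finset.sum_congr rfl
      intro i _
      rw [Algebra.smul_def]
    have key : f (b ^ n) = f (- ∑ i ∈ Finset.range n, p.coeff i * b ^ i * a ^ (n - i)) := by
      rw [map_pow, hb, mul_pow, hhn, neg_mul, map_neg, map_sum, Finset.sum_mul]
      congr 1
      apply Finset.sum_congr rfl
      intro i hi
      rw [Finset.mem_range] at hi
      have hpow : f a ^ n = f a ^ i * f a ^ (n - i) := by
        rw [← pow_add, Nat.add_sub_cancel' hi.le]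
      rw [map_mul, map_mul, map_pow, map_pow, hb, hpow, mul_pow]
      ring
    have hb_eq := hinj key
    rw [hb_eq]
    apply neg_mem
    apply Ideal.sum_mem
    intro i hi
    rw [Finset.mem_range] at hi
    have hmem : a ^ (n - i) ∈ I := by
      have h1 : 1 ≤ n - i := Nat.one_le_iff_ne_zero.mpr (Nat.sub_ne_zero_of_lt hi)
      have : a ^ (n - i) = a ^ (n - i - 1) * a := by
        rw [← pow_succ, Nat.sub_add_cancel h1]
      rw [this]; exact I.mul_mem_left _ ha
    exact I.mul_mem_left _ hmem
end

section
/- Let R be a commutative reduced ring, I a radical ideal of R containing a nonzerodivisor, and R̃ the integral closure of R in its total quotient ring. Then {h ∈ R̃ : h·I ⊆ I} = {h ∈ R̃ : h·I ⊆ R}; i.e., under the identification of Hom_R(I,I) with a subring of R̃, one has Hom_R(I,I) = Hom_R(I,R) ∩ R̃. -/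
/-- For a radical ideal `I` containing a nonzerodivisor of a reduced ring `R`, inside the
integral closure `R̃` of `R` in `Frac(R)` one has
`{h ∈ R̃ : h·I ⊆ I} = {h ∈ R̃ : h·I ⊆ R}`. -/
theorem stmt_3 (R : Type*) [CommRing R] [IsReduced R]
    (I : Ideal R) (hrad : I.IsRadical) (hnzd : ∃ f ∈ I, f ∈ nonZeroDivisors R) :
    {h : FractionRing R | IsIntegral R h ∧
        ∀ a ∈ I, ∃ b ∈ I, h * algebraMap R (FractionRing R) a
          = algebraMap R (FractionRing R) b}
      = {h : FractionRing R | IsIntegral R h ∧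
        ∀ a ∈ I, h * algebraMap R (FractionRing R) a
          ∈ Set.range (algebraMap R (FractionRing R))} := by
  classical
  set φ := algebraMap R (FractionRing R) with hφ
  have φinj : Function.Injective φ := IsFractionRing.injective R (FractionRing R)
  ext h
  simp only [Set.mem_setOf_eq]
  refine and_congr_right fun hint => ⟨fun H a ha => ?_, fun H a ha => ?_⟩
  · obtain ⟨b, _, hb⟩ := H a ha
    exact ⟨b, hb.symm⟩
  · obtain ⟨b, hb⟩ := H a ha
    refine ⟨b, ?_, hb.symm⟩
    obtain ⟨p, pm, pe⟩ := hint
    set n := p.natDegree with hn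
    have hpow : h ^ n = -∑ i ∈ Finset.range n, φ (p.coeff i) * h ^ i := by
      have h0 : ∑ i ∈ Finset.range (n + 1), φ (p.coeff i) * h ^ i = 0 := by
        rw [← pe, Polynomial.eval₂_eq_sum_range]
      rw [Finset.sum_range_succ, pm.coeff_natDegree, map_one, one_mul] at h0
      exact eq_neg_of_add_eq_zero_left (by rw [add_comm]; exact h0)
    have key : b ^ n = -∑ i ∈ Finset.range n, p.coeff i * (b ^ i * a ^ (n - i)) := by
      apply φinj
      rw [map_pow, hb, map_neg, map_sum, mul_pow, hpow, neg_mul, Finset.sum_mul]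
      congr 1
      refine Finset.sum_congr rfl fun i hi => ?_
      rw [Finset.mem_range] at hi
      have hin : i + (n - i) = n := by omega
      rw [map_mul, map_mul, map_pow, map_pow, hb, mul_pow,
        show φ a ^ n = φ a ^ i * φ a ^ (n - i) from by rw [← pow_add, hin]]
      ring
    have hbn : b ^ n ∈ I := by
      rw [key]
      refine neg_mem (Ideal.sum_mem _ fun i hi => ?_)
      rw [Finset.mem_range] at hi
      exact Ideal.mul_mem_left _ _ (Ideal.mul_mem_left _ _
        (Ideal.pow_mem_of_mem I ha _ (by omega)))
    exact hrad ⟨n, hbn⟩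
end

section
/- Let R be a commutative reduced Noetherian ring, I an ideal containing a nonzerodivisor, and R̃ the integral closure of R in its total quotient ring. Suppose {h ∈ R̃ : h·I ⊆ I} = {h ∈ R̃ : h·I ⊆ R}. If every h ∈ R̃ satisfies h·I^d ⊆ R for some d ≥ 1, and moreover {h ∈ R̃ : h·I ⊆ I} = R, then R = R̃, i.e., R is integrally closed in its total quotient ring. -/
/-- Normality criterion: if `{h ∈ R̃ : h·I ⊆ I} = {h ∈ R̃ : h·I ⊆ R}`, every `h ∈ R̃`
satisfies `h·I^d ⊆ R` for some `d ≥ 1`, and `{h ∈ R̃ : h·I ⊆ I} = R`, then `R = R̃`. -/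
theorem stmt_4 (R : Type*) [CommRing R] [IsNoetherianRing R] [IsReduced R]
    (I : Ideal R) (hnzd : ∃ f ∈ I, f ∈ nonZeroDivisors R)
    (hstar : {h : FractionRing R | IsIntegral R h ∧
        ∀ a ∈ I, ∃ b ∈ I, h * algebraMap R (FractionRing R) a
          = algebraMap R (FractionRing R) b}
      = {h : FractionRing R | IsIntegral R h ∧
        ∀ a ∈ I, h * algebraMap R (FractionRing R) a
          ∈ Set.range (algebraMap R (FractionRing R))})
    (hpow : ∀ h : FractionRing R, IsIntegral R h → ∃ d : ℕ, 1 ≤ d ∧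
        ∀ a ∈ I ^ d, h * algebraMap R (FractionRing R) a
          ∈ Set.range (algebraMap R (FractionRing R)))
    (heq : {h : FractionRing R | IsIntegral R h ∧
        ∀ a ∈ I, ∃ b ∈ I, h * algebraMap R (FractionRing R) a
          = algebraMap R (FractionRing R) b}
      = Set.range (algebraMap R (FractionRing R))) :
    ∀ h : FractionRing R, IsIntegral R h →
      h ∈ Set.range (algebraMap R (FractionRing R)) := by
  have L : ∀ g : FractionRing R, IsIntegral R g →
      (∀ a ∈ I, g * algebraMap R (FractionRing R) a
        ∈ Set.range (algebraMap R (FractionRing R))) →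
      g ∈ Set.range (algebraMap R (FractionRing R)) := by
    intro g hg hI
    have : g ∈ {h : FractionRing R | IsIntegral R h ∧
        ∀ a ∈ I, h * algebraMap R (FractionRing R) a
          ∈ Set.range (algebraMap R (FractionRing R))} := ⟨hg, hI⟩
    rw [← hstar, heq] at this
    exact this
  have key : ∀ d : ℕ, ∀ h : FractionRing R, IsIntegral R h →
      (∀ a ∈ I ^ d, h * algebraMap R (FractionRing R) a
        ∈ Set.range (algebraMap R (FractionRing R))) →
      h ∈ Set.range (algebraMap R (FractionRing R)) := by
    intro d
    induction d with
    | zero =>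
      intro h _ hd
      have := hd 1 (by simp)
      simpa using this
    | succ n ih =>
      intro h hh hd
      refine ih h hh ?_
      intro a ha
      have hg : IsIntegral R (h * algebraMap R (FractionRing R) a) :=
        hh.mul (isIntegral_algebraMap)
      have := L (h * algebraMap R (FractionRing R) a) hg ?_
      · obtain ⟨c, hc⟩ := this
        exact ⟨c, hc⟩
      · intro b hb
        obtain ⟨c, hc⟩ := hd (a * b) (by rw [pow_succ]; exact Ideal.mul_mem_mul ha hb)
        exact ⟨c, by rw [hc, map_mul]; ring⟩
  intro h hh
  obtain ⟨d, _, hd⟩ := hpow h hh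
  exact key d h hh hd
end

section
/- Let R be a commutative Noetherian ring and I an ideal containing a nonzerodivisor. Then Hom_R(I, I), viewed as a subring of the total quotient ring of R via φ ↦ φ(f)/f for a nonzerodivisor f ∈ I, is a finitely generated R-module, hence a module-finite R-algebra. -/
/-- For a Noetherian ring `R` and an ideal `I` containing a nonzerodivisor,
`Hom_R(I,I)` is a finitely generated `R`-module. -/
theorem stmt_9 (R : Type*) [CommRing R] [IsNoetherianRing R]
    (I : Ideal R) (hnzd : ∃ f ∈ I, f ∈ nonZeroDivisors R) :
    Module.Finite R (Module.End R I) := by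
  obtain ⟨f, hfI, hf⟩ := hnzd
  have : Module.Finite R I := Module.Finite.of_restrictScalars_finite R R I
  refine Module.Finite.of_injective (LinearMap.applyₗ (⟨f, hfI⟩ : I)) ?_
  intro φ ψ h
  ext x
  have key : f • φ x = f • ψ x := by
    have h1 : φ (f • x) = (x : R) • φ ⟨f, hfI⟩ := by
      rw [← map_smul]
      congr 1
      ext
      simp [mul_comm]
    have h2 : ψ (f • x) = (x : R) • ψ ⟨f, hfI⟩ := by
      rw [← map_smul]
      congr 1
      ext
      simp [mul_comm]
    rw [← map_smul, ← map_smul, h1, h2]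
    simp only [LinearMap.applyₗ_apply_apply] at h
    rw [h]
  have : f * (φ x : R) = f * (ψ x : R) := congrArg Subtype.val key
  exact (mul_cancel_left_mem_nonZeroDivisors hf).mp this
end

section
/- Let R be a commutative reduced Noetherian ring, I an ideal containing a nonzerodivisor, and identify S = {h ∈ Frac(R) : h·I ⊆ I} as a subring of Frac(R). If u₀ = 1, u₁, …, u_t generate S as an R-module, with relations L_i = Σ_j α_{ij} X_j generating the kernel of the surjection R^{t+1} → S, X_j ↦ u_j, and elements β_{ijk} ∈ R with u_i·u_j = Σ_k β_{ijk} u_k, then S ≅ R[X₁,…,X_t]/J as R-algebras, where J is generated by the L_i (with X₀ = 1) and the quadratic polynomials Q_{ij} = X_i X_j − Σ_k β_{ijk} X_k for 1 ≤ i ≤ j ≤ t. -/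
open MvPolynomial

/-- The subring `S = {h ∈ Frac(R) : h·I ⊆ I}` of the total quotient ring,
identified with `Hom_R(I,I)`. -/
def endoSubalgebra (R : Type*) [CommRing R] (I : Ideal R) :
    Subalgebra R (FractionRing R) where
  carrier := {h | ∀ a ∈ I, ∃ b ∈ I,
    h * algebraMap R (FractionRing R) a = algebraMap R (FractionRing R) b}
  mul_mem' := by
    intro x y hx hy a ha
    obtain ⟨b, hb, eb⟩ := hy a ha
    obtain ⟨c, hc, ec⟩ := hx b hb
    exact ⟨c, hc, by rw [mul_assoc, eb, ec]⟩
  add_mem' := by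
    intro x y hx hy a ha
    obtain ⟨b, hb, eb⟩ := hx a ha
    obtain ⟨c, hc, ec⟩ := hy a ha
    exact ⟨b + c, I.add_mem hb hc, by rw [add_mul, eb, ec, map_add]⟩
  algebraMap_mem' := by
    intro r a ha
    exact ⟨r * a, I.mul_mem_left r ha, by rw [map_mul]⟩

set_option synthInstance.maxHeartbeats 1000000
set_option maxHeartbeats 1000000

/-- Catanese's presentation of the ring `S = Hom_R(I,I)`: given module generators
`u₀ = 1, u₁, …, u_t` of `S`, linear syzygies `L_i` generating the kernel, and structure
constants `β` with `u_i u_j = Σ_k β_{ijk} u_k`, one has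
`S ≅ R[X]/J` where `J` is generated by `X₀ - 1`, the `L_i` and the
`Q_{ij} = X_i X_j - Σ_k β_{ijk} X_k` for `1 ≤ i ≤ j ≤ t`, via `X_k ↦ u_k`. -/
theorem stmt_10 (R : Type*) [CommRing R] [IsNoetherianRing R] [IsReduced R]
    (I : Ideal R) (hnzd : ∃ f ∈ I, f ∈ nonZeroDivisors R)
    (t s : ℕ) (u : Fin (t + 1) → endoSubalgebra R I)
    (hu0 : u 0 = 1)
    (hgen : Submodule.span R (Set.range u) = ⊤)
    (α : Fin s → Fin (t + 1) → R)
    (hker : ∀ c : Fin (t + 1) → R,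
      (∑ k, c k • u k = 0) ↔ c ∈ Submodule.span R (Set.range α))
    (β : Fin (t + 1) → Fin (t + 1) → Fin (t + 1) → R)
    (hβ : ∀ i j : Fin (t + 1), u i * u j = ∑ k, β i j k • u k) :
    ∃ e : (MvPolynomial (Fin (t + 1)) R ⧸
        (Ideal.span ({X 0 - 1} ∪
          (Set.range fun i : Fin s => ∑ j, C (α i j) * X j) ∪
          {q : MvPolynomial (Fin (t + 1)) R | ∃ i j : Fin (t + 1),
            0 < i ∧ i ≤ j ∧ q = X i * X j - ∑ k, C (β i j k) * X k})))
      ≃ₐ[R] endoSubalgebra R I,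
      ∀ k : Fin (t + 1), e (Ideal.Quotient.mk _ (X k)) = u k := by
  classical
  set Jset : Set (MvPolynomial (Fin (t + 1)) R) :=
    ({X 0 - 1} ∪ (Set.range fun i : Fin s => ∑ j, C (α i j) * X j) ∪
      {q : MvPolynomial (Fin (t + 1)) R | ∃ i j : Fin (t + 1),
        0 < i ∧ i ≤ j ∧ q = X i * X j - ∑ k, C (β i j k) * X k}) with hJset
  set J : Ideal (MvPolynomial (Fin (t + 1)) R) := Ideal.span Jset with hJdef
  set f : MvPolynomial (Fin (t + 1)) R →ₐ[R] endoSubalgebra R I := aeval u with hf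
  have hfX : ∀ k, f (X k) = u k := fun k => aeval_X u k
  -- f kills every generator of J
  have hgen0 : ∀ q ∈ Jset, f q = 0 := by
    intro q hq
    rcases hq with (hq | hq) | hq
    · rcases hq with rfl
      rw [hf, map_sub, aeval_X, hu0, map_one, sub_self]
    · obtain ⟨i, rfl⟩ := hq
      have h := (hker (α i)).2 (Submodule.subset_span ⟨i, rfl⟩)
      simp only [hf, map_sum, map_mul, aeval_C, aeval_X]
      simp only [Algebra.smul_def] at h
      exact h
    · obtain ⟨i, j, _, _, rfl⟩ := hq
      simp only [hf, map_sub, map_sum, map_mul, aeval_C, aeval_X]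
      rw [hβ i j]
      simp only [Algebra.smul_def]
      rw [sub_self]
  have hJle : J ≤ RingHom.ker f := by
    rw [hJdef, Ideal.span_le]
    intro q hq
    exact hgen0 q hq
  have hfJ : ∀ p q : MvPolynomial (Fin (t + 1)) R,
      Ideal.Quotient.mk J p = Ideal.Quotient.mk J q → f p = f q := by
    intro p q h
    have h1 : p - q ∈ J := (Ideal.Quotient.eq).1 h
    have h2 : f (p - q) = 0 := hJle h1
    rw [map_sub, sub_eq_zero] at h2
    exact h2
  have hmem : ∀ q ∈ Jset, Ideal.Quotient.mk J q = 0 := fun q hq =>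
    Ideal.Quotient.eq_zero_iff_mem.2 (Ideal.subset_span hq)
  have hX0 : Ideal.Quotient.mk J (X 0 : MvPolynomial (Fin (t + 1)) R) = 1 := by
    have h := hmem (X 0 - 1) (Or.inl (Or.inl rfl))
    rw [map_sub, sub_eq_zero, map_one] at h
    exact h
  have hsingle : ∀ (i : Fin (t + 1)) (a : R),
      (∑ m, (C ((Pi.single i a : Fin (t + 1) → R) m) : MvPolynomial (Fin (t + 1)) R) * X m)
        = C a * X i := by
    intro i a
    rw [Finset.sum_eq_single i]
    · simp
    · intro b _ hb; simp [Pi.single_eq_of_ne hb]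
    · simp
  -- products of variables reduce to linear mod J
  have hXX : ∀ k i : Fin (t + 1), ∃ d : Fin (t + 1) → R,
      Ideal.Quotient.mk J (X k * X i) = Ideal.Quotient.mk J (∑ m, C (d m) * X m) := by
    intro k i
    by_cases hk : k = 0
    · refine ⟨Pi.single i 1, ?_⟩
      subst hk
      rw [hsingle i 1, map_mul, map_mul, hX0, one_mul]; simp
    · by_cases hi : i = 0
      · refine ⟨Pi.single k 1, ?_⟩
        subst hi
        rw [hsingle k 1, map_mul, map_mul, hX0, mul_one]; simp
      · have hk0 : 0 < k := Fin.pos_of_ne_zero hk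
        have hi0 : 0 < i := Fin.pos_of_ne_zero hi
        rcases le_total k i with hle | hle
        · refine ⟨β k i, ?_⟩
          have h := hmem (X k * X i - ∑ m, C (β k i m) * X m) (Or.inr ⟨k, i, hk0, hle, rfl⟩)
          rw [map_sub, sub_eq_zero] at h
          exact h
        · refine ⟨β i k, ?_⟩
          have h := hmem (X i * X k - ∑ m, C (β i k m) * X m) (Or.inr ⟨i, k, hi0, hle, rfl⟩)
          rw [map_sub, sub_eq_zero] at h
          rw [mul_comm]
          exact h
  -- every polynomial reduces to a linear one mod J
  have hred : ∀ p : MvPolynomial (Fin (t + 1)) R, ∃ c : Fin (t + 1) → R,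
      Ideal.Quotient.mk J p = Ideal.Quotient.mk J (∑ m, C (c m) * X m) := by
    intro p
    induction p using MvPolynomial.induction_on with
    | C a =>
      refine ⟨Pi.single 0 a, ?_⟩
      rw [hsingle 0 a, map_mul, hX0, mul_one]
    | add p q hp hq =>
      obtain ⟨c, hc⟩ := hp
      obtain ⟨c', hc'⟩ := hq
      refine ⟨c + c', ?_⟩
      have h : (∑ m, (C ((c + c') m) : MvPolynomial (Fin (t + 1)) R) * X m)
          = (∑ m, (C (c m) : MvPolynomial (Fin (t + 1)) R) * X m) + ∑ m, C (c' m) * X m := by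
        rw [← Finset.sum_add_distrib]
        refine Finset.sum_congr rfl fun m _ => ?_
        rw [Pi.add_apply, map_add, add_mul]
      rw [h, map_add, map_add, hc, hc']
    | mul_X p i hp =>
      obtain ⟨c, hc⟩ := hp
      choose d hd using fun k => hXX k i
      refine ⟨fun m => ∑ k, c k * d k m, ?_⟩
      have key : (∑ k, (C (c k) : MvPolynomial (Fin (t + 1)) R) * ∑ m, C (d k m) * X m)
          = ∑ m, C (∑ k, c k * d k m) * X m := by
        calc (∑ k, (C (c k) : MvPolynomial (Fin (t + 1)) R) * ∑ m, C (d k m) * X m)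
            = ∑ k, ∑ m, (C (c k * d k m) : MvPolynomial (Fin (t + 1)) R) * X m := by
              refine Finset.sum_congr rfl fun k _ => ?_
              rw [Finset.mul_sum]
              refine Finset.sum_congr rfl fun m _ => ?_
              rw [map_mul, mul_assoc]
          _ = ∑ m, ∑ k, (C (c k * d k m) : MvPolynomial (Fin (t + 1)) R) * X m :=
              Finset.sum_comm
          _ = ∑ m, C (∑ k, c k * d k m) * X m := by
              refine Finset.sum_congr rfl fun m _ => ?_
              rw [map_sum, Finset.sum_mul]
      calc Ideal.Quotient.mk J (p * X i)
          = Ideal.Quotient.mk J ((∑ m, C (c m) * X m) * X i) := by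
            rw [map_mul, hc, ← map_mul]
        _ = ∑ k, Ideal.Quotient.mk J (C (c k)) * Ideal.Quotient.mk J (X k * X i) := by
            rw [Finset.sum_mul, map_sum]
            refine Finset.sum_congr rfl fun k _ => ?_
            rw [mul_assoc, map_mul]
        _ = ∑ k, Ideal.Quotient.mk J (C (c k))
              * Ideal.Quotient.mk J (∑ m, C (d k m) * X m) := by
            refine Finset.sum_congr rfl fun k _ => ?_
            rw [hd k]
        _ = Ideal.Quotient.mk J (∑ k, (C (c k) : MvPolynomial (Fin (t + 1)) R)
              * ∑ m, C (d k m) * X m) := by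
            rw [map_sum]
            refine Finset.sum_congr rfl fun k _ => ?_
            rw [map_mul]
        _ = Ideal.Quotient.mk J (∑ m, C (∑ k, c k * d k m) * X m) := by rw [key]
  -- linear map c ↦ Σ C (c m) * X m
  set Φ : (Fin (t + 1) → R) →ₗ[R] MvPolynomial (Fin (t + 1)) R :=
    { toFun := fun c => ∑ m, C (c m) * X m
      map_add' := by
        intro c c'
        rw [← Finset.sum_add_distrib]
        refine Finset.sum_congr rfl fun m _ => ?_
        rw [Pi.add_apply, map_add, add_mul]
      map_smul' := by
        intro r c
        simp only [RingHom.id_apply]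
        show (∑ m, (C ((r • c) m) : MvPolynomial (Fin (t + 1)) R) * X m)
          = r • ∑ m, C (c m) * X m
        rw [Finset.smul_sum]
        refine Finset.sum_congr rfl fun m _ => ?_
        rw [Pi.smul_apply, smul_eq_mul, map_mul, smul_eq_C_mul, mul_assoc] } with hΦ
  have hΦJ : ∀ c ∈ Submodule.span R (Set.range α), Φ c ∈ J := by
    intro c hc
    have hle : Submodule.span R (Set.range α) ≤ (J.restrictScalars R).comap Φ := by
      rw [Submodule.span_le]
      rintro _ ⟨i, rfl⟩
      show Φ (α i) ∈ J
      exact Ideal.subset_span (Or.inl (Or.inr ⟨i, rfl⟩))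
    exact hle hc
  -- kernel of f equals J
  have hJeq : J = RingHom.ker f := by
    refine le_antisymm hJle ?_
    intro p hp
    have hp0 : f p = 0 := hp
    obtain ⟨c, hc⟩ := hred p
    have hfc : f (∑ m, C (c m) * X m) = 0 := by
      rw [← hfJ _ _ hc]
      exact hp0
    have hsum : ∑ k, c k • u k = 0 := by
      simp only [hf, map_sum, map_mul, aeval_C, aeval_X] at hfc
      simp only [Algebra.smul_def]
      exact hfc
    have hcs : c ∈ Submodule.span R (Set.range α) := (hker c).1 hsum
    have hlin : (∑ m, C (c m) * X m : MvPolynomial (Fin (t + 1)) R) ∈ J := hΦJ c hcs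
    have hdiff : p - ∑ m, C (c m) * X m ∈ J := (Ideal.Quotient.eq).1 hc
    have := J.add_mem hdiff hlin
    simpa using this
  -- surjectivity of f
  have hsurj : Function.Surjective f := by
    intro y
    have hy : (y : endoSubalgebra R I) ∈ Submodule.span R (Set.range u) := by
      rw [hgen]; trivial
    obtain ⟨c, hc⟩ := (Submodule.mem_span_range_iff_exists_fun R).1 hy
    refine ⟨∑ m, C (c m) * X m, ?_⟩
    simp only [hf, map_sum, map_mul, aeval_C, aeval_X]
    simp only [Algebra.smul_def] at hc
    exact hc
  refine ⟨(Ideal.quotientEquivAlgOfEq R hJeq).trans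
    (Ideal.quotientKerAlgEquivOfSurjective hsurj), ?_⟩
  intro k
  rw [AlgEquiv.trans_apply, Ideal.quotientEquivAlgOfEq_mk]
  have : (Ideal.quotientKerAlgEquivOfSurjective hsurj) (Ideal.Quotient.mk (RingHom.ker f) (X k))
      = f (X k) := rfl
  rw [this, hfX]
end

section
/- Let R be a commutative reduced Noetherian ring, R̃ its integral closure in the total quotient ring Frac(R), and I a radical ideal of R containing a nonzerodivisor such that every prime 𝔭 with R_𝔭 not normal contains I. If {h ∈ Frac(R) : h·I ⊆ I} = R, then R = R̃ (R is integrally closed in Frac(R)). -/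
/-!
For `h ∈ Frac(R)` integral over `R`, consider its ideal of denominators `𝔞 = {r : r h ∈ R}`.
If `R_𝔭` is normal, the image of `h` in `Frac(R_𝔭)` lies in `R_𝔭`, so `𝔞 ⊄ 𝔭`; hence every
prime containing `𝔞` contains `I`, and since `I` is finitely generated, `I ^ n ⊆ 𝔞` for some `n`.
Now descend on `n`: if `I ^ (n + 1) ⊆ 𝔞`, then `I ^ n` lies in the ideal of denominators of each
`a h` with `a ∈ I`, so `a h ∈ R` by induction. Then `a h ∈ I`: multiplying an integral equation
of `h` of degree `d` by `a ^ d` shows `(a h) ^ d ∈ (a) ⊆ I`, and `I` is radical.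
So `h I ⊆ I`, i.e. `h ∈ Hom_R(I, I) = R`.
-/

open Polynomial Submodule

section Colon

variable {R A : Type*} [CommRing R] [CommRing A] [Algebra R A] {I : Ideal R}

theorem Ideal.IsRadical.mem_of_isIntegral_of_algebraMap_eq_smul [FaithfulSMul R A]
    (hrad : I.IsRadical) {x : A} (hx : IsIntegral R x) {a r : R} (ha : a ∈ I)
    (hr : algebraMap R A r = a • x) : r ∈ I := by
  obtain ⟨p, hmonic, hp⟩ := hx
  have hroot : (p.scaleRoots a).IsRoot r := by
    apply FaithfulSMul.algebraMap_injective R A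
    rw [map_zero, ← aeval_algebraMap_apply_eq_algebraMap_eval, hr, Algebra.smul_def]
    exact scaleRoots_aeval_eq_zero hp
  have heis : (p.scaleRoots a).IsWeaklyEisensteinAt I := ⟨fun {i} hi => by
    rw [natDegree_scaleRoots] at hi
    rw [coeff_scaleRoots]
    exact I.mul_mem_left _ (I.pow_mem_of_mem ha _ (by omega))⟩
  exact hrad ⟨_, heis.pow_natDegree_le_of_root_of_monic_mem hroot
    ((monic_scaleRoots_iff a).2 hmonic) _ le_rfl⟩

theorem Ideal.IsRadical.mem_range_of_isIntegral_of_pow_le_colon [FaithfulSMul R A]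
    (hrad : I.IsRadical)
    (hend : ∀ x : A, (∀ a ∈ I, ∃ b ∈ I, x * algebraMap R A a = algebraMap R A b) →
      x ∈ Set.range (algebraMap R A))
    (n : ℕ) {x : A} (hx : IsIntegral R x) (hn : I ^ n ≤ (1 : Submodule R A).colon {x}) :
    x ∈ Set.range (algebraMap R A) := by
  induction n generalizing x with
  | zero =>
    have h1 : (1 : R) • x ∈ (1 : Submodule R A) := mem_colon_singleton.1 (hn (by simp))
    simpa [mem_one] using h1
  | succ n ih =>
    refine hend x fun a ha => ?_
    have hax : a • x ∈ Set.range (algebraMap R A) := by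
      refine ih (hx.smul a) fun b hb => mem_colon_singleton.2 ?_
      rw [smul_smul]
      exact mem_colon_singleton.1 (hn (pow_succ I n ▸ Ideal.mul_mem_mul hb ha))
    obtain ⟨r, hr⟩ := hax
    exact ⟨r, hrad.mem_of_isIntegral_of_algebraMap_eq_smul hx ha hr,
      by rw [hr, Algebra.smul_def, mul_comm]⟩

end Colon

namespace IsLocalization

variable {R : Type*} [CommRing R] (M : Submonoid R) (L : Type*) [CommRing L] [Algebra R L]
  [IsLocalization M L] {K : Type*} [CommRing K] [Algebra R K] [IsFractionRing R K]

variable (K) in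
noncomputable def fractionRingMap : K →+* FractionRing L :=
  map (FractionRing L) (algebraMap R L) (nonZeroDivisors_le_comap M L)

variable (K) in
theorem fractionRingMap_algebraMap (r : R) :
    fractionRingMap M L K (algebraMap R K r) = algebraMap L (FractionRing L) (algebraMap R L r) :=
  map_eq _ r

theorem exists_mem_smul_eq_zero_of_fractionRingMap_eq_zero {z : K}
    (hz : fractionRingMap M L K z = 0) : ∃ t ∈ M, t • z = 0 := by
  obtain ⟨⟨a, b⟩, rfl⟩ := mk'_surjective (nonZeroDivisors R) z
  rw [fractionRingMap, map_mk', mk'_eq_zero_iff] at hz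
  obtain ⟨m, hm⟩ := hz
  rw [mul_left_mem_nonZeroDivisors_eq_zero_iff m.2, map_eq_zero_iff M L] at hm
  obtain ⟨t, ht⟩ := hm
  exact ⟨t, t.2, by rw [smul_mk', ht, mk'_zero]⟩

theorem exists_mem_smul_mem_one_of_isIntegral [IsIntegrallyClosed L] {x : K}
    (hx : IsIntegral R x) : ∃ s ∈ M, s • x ∈ (1 : Submodule R K) := by
  -- The image of `x` in `Frac(L)` is some `r / s ∈ L`, so `s x - r` dies in `Frac(L)`.
  have hmap : IsIntegral L (fractionRingMap M L K x) :=
    hx.map_of_comp_eq (algebraMap R L) _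
      (RingHom.ext fun r => (fractionRingMap_algebraMap M L K r).symm)
  obtain ⟨y, hy⟩ := IsIntegrallyClosed.algebraMap_eq_of_integral hmap
  obtain ⟨⟨r, s⟩, rfl⟩ := mk'_surjective M y
  have hker : fractionRingMap M L K ((s : R) • x - algebraMap R K r) = 0 := by
    rw [map_sub, Algebra.smul_def, map_mul, fractionRingMap_algebraMap,
      fractionRingMap_algebraMap, ← hy, ← map_mul, mul_comm, mk'_spec, sub_self]
  obtain ⟨t, ht, htz⟩ := exists_mem_smul_eq_zero_of_fractionRingMap_eq_zero M L hker
  refine ⟨t * s, M.mul_mem ht s.2, mem_one.2 ⟨t * r, ?_⟩⟩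
  rw [smul_sub, sub_eq_zero, ← mul_smul] at htz
  rw [htz, map_mul, Algebra.smul_def]

end IsLocalization

theorem le_radical_colon_of_isIntegral {R K : Type*} [CommRing R] [CommRing K] [Algebra R K]
    [IsFractionRing R K] {I : Ideal R}
    (hNNL : ∀ (𝔭 : Ideal R) [𝔭.IsPrime], ¬ IsIntegrallyClosed (Localization.AtPrime 𝔭) → I ≤ 𝔭)
    {x : K} (hx : IsIntegral R x) : I ≤ ((1 : Submodule R K).colon {x}).radical := by
  rw [Ideal.radical_eq_sInf]
  refine le_sInf fun 𝔭 ⟨hle, _⟩ => hNNL 𝔭 fun _ => ?_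
  obtain ⟨s, hs, hsx⟩ :=
    IsLocalization.exists_mem_smul_mem_one_of_isIntegral 𝔭.primeCompl (Localization.AtPrime 𝔭) hx
  exact hs (hle (mem_colon_singleton.2 hsx))

theorem stmt_14_general (R : Type*) [CommRing R] [IsNoetherianRing R]
    (I : Ideal R) (hrad : I.IsRadical)
    (hNNL : ∀ (𝔭 : Ideal R) [𝔭.IsPrime],
      ¬ (∀ x : FractionRing (Localization.AtPrime 𝔭),
          IsIntegral (Localization.AtPrime 𝔭) x →
            x ∈ Set.range (algebraMap (Localization.AtPrime 𝔭)
              (FractionRing (Localization.AtPrime 𝔭)))) → I ≤ 𝔭)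
    (heq : {h : FractionRing R |
        ∀ a ∈ I, ∃ b ∈ I, h * algebraMap R (FractionRing R) a
          = algebraMap R (FractionRing R) b}
      = Set.range (algebraMap R (FractionRing R))) :
    ∀ h : FractionRing R, IsIntegral R h →
      h ∈ Set.range (algebraMap R (FractionRing R)) := by
  intro h hh
  have hNNL' : ∀ (𝔭 : Ideal R) [𝔭.IsPrime],
      ¬ IsIntegrallyClosed (Localization.AtPrime 𝔭) → I ≤ 𝔭 := fun 𝔭 _ hn =>
    hNNL 𝔭 fun hcl => hn ((isIntegrallyClosed_iff _).2 (hcl _ ·))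
  obtain ⟨n, hn⟩ := Ideal.exists_pow_le_of_le_radical_of_fg
    (le_radical_colon_of_isIntegral hNNL' hh) (IsNoetherian.noetherian I)
  exact hrad.mem_range_of_isIntegral_of_pow_le_colon (fun x hx => heq ▸ hx) n hh hn

/-- Grauert–Remmert normality criterion: let `I` be a radical ideal containing a
nonzerodivisor such that every prime `𝔭` with `R_𝔭` not normal contains `I`.
If `{h ∈ Frac(R) : h·I ⊆ I} = R`, then `R` is integrally closed in `Frac(R)`. -/
theorem stmt_14 (R : Type*) [CommRing R] [IsNoetherianRing R] [IsReduced R]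
    (I : Ideal R) (hrad : I.IsRadical) (hnzd : ∃ f ∈ I, f ∈ nonZeroDivisors R)
    (hNNL : ∀ (𝔭 : Ideal R) [𝔭.IsPrime],
      ¬ (∀ x : FractionRing (Localization.AtPrime 𝔭),
          IsIntegral (Localization.AtPrime 𝔭) x →
            x ∈ Set.range (algebraMap (Localization.AtPrime 𝔭)
              (FractionRing (Localization.AtPrime 𝔭)))) → I ≤ 𝔭)
    (heq : {h : FractionRing R |
        ∀ a ∈ I, ∃ b ∈ I, h * algebraMap R (FractionRing R) a
          = algebraMap R (FractionRing R) b}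
      = Set.range (algebraMap R (FractionRing R))) :
    ∀ h : FractionRing R, IsIntegral R h →
      h ∈ Set.range (algebraMap R (FractionRing R)) :=
  stmt_14_general R I hrad hNNL heq
end

section
/- Let R be a commutative reduced ring, I a radical ideal containing a nonzerodivisor, and h an element of the total quotient ring of R integral over R with h ∉ R but h·I ⊆ R. Then the subring S = {x ∈ Frac(R) : x·I ⊆ I} of Frac(R) strictly contains R (i.e., h ∈ S \ R). -/
/-- If `I` is a radical ideal containing a nonzerodivisor of a reduced ring `R` and
`h ∈ Frac(R)` is integral over `R` with `h ∉ R` but `h·I ⊆ R`, then `h` belongs to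
`S = {x ∈ Frac(R) : x·I ⊆ I}`, so `S` strictly contains `R`. -/
theorem stmt_17 (R : Type*) [CommRing R] [IsReduced R]
    (I : Ideal R) (hrad : I.IsRadical) (hnzd : ∃ f ∈ I, f ∈ nonZeroDivisors R)
    (h : FractionRing R) (hint : IsIntegral R h)
    (hnotin : h ∉ Set.range (algebraMap R (FractionRing R)))
    (hIR : ∀ a ∈ I, h * algebraMap R (FractionRing R) a
        ∈ Set.range (algebraMap R (FractionRing R))) :
    (∀ a ∈ I, ∃ b ∈ I, h * algebraMap R (FractionRing R) a
        = algebraMap R (FractionRing R) b) ∧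
      h ∉ Set.range (algebraMap R (FractionRing R)) := by
  refine ⟨?_, hnotin⟩
  intro a ha
  obtain ⟨b, hb⟩ := hIR a ha
  refine ⟨b, ?_, hb.symm⟩
  obtain ⟨p, hmonic, hp⟩ := hint
  set f := algebraMap R (FractionRing R) with hf
  have hinj : Function.Injective f := IsFractionRing.injective R (FractionRing R)
  set n := p.natDegree with hn
  have key : f (∑ i ∈ Finset.range (n+1), p.coeff i * a^(n-i) * b^i) = 0 := by
    rw [map_sum]
    have heval : (∑ i ∈ Finset.range (n+1), f (p.coeff i) * h ^ i) = 0 := by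
      have := Polynomial.aeval_eq_sum_range (p := p) h
      rw [Polynomial.aeval_def, hp] at this
      simpa [Algebra.smul_def] using this.symm
    calc ∑ i ∈ Finset.range (n+1), f (p.coeff i * a^(n-i) * b^i)
        = ∑ i ∈ Finset.range (n+1), f (p.coeff i) * h ^ i * (f a)^n := by
          apply Finset.sum_congr rfl
          intro i hi
          have hi' : i ≤ n := Nat.lt_succ_iff.mp (Finset.mem_range.mp hi)
          have : (f b)^i = h^i * (f a)^i := by rw [hb, mul_pow]
          rw [map_mul, map_mul, map_pow, map_pow, this,
            ← pow_sub_mul_pow (f a) hi']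
          ring
      _ = (∑ i ∈ Finset.range (n+1), f (p.coeff i) * h ^ i) * (f a)^n := by
          rw [Finset.sum_mul]
      _ = 0 := by rw [heval, zero_mul]
  have hsum : (∑ i ∈ Finset.range (n+1), p.coeff i * a^(n-i) * b^i) = 0 := by
    apply hinj; rw [key, map_zero]
  rw [Finset.sum_range_succ] at hsum
  have hlast : p.coeff n * a^(n-n) * b^n = b^n := by
    rw [hmonic.coeff_natDegree, Nat.sub_self, pow_zero]; ring
  rw [hlast] at hsum
  have hbn : b ^ n ∈ I := by
    have : b ^ n = -(∑ i ∈ Finset.range n, p.coeff i * a^(n-i) * b^i) := by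
      linear_combination hsum
    rw [this]
    refine neg_mem (Ideal.sum_mem I ?_)
    intro i hi
    have hi' : i < n := Finset.mem_range.mp hi
    have : a ^ (n - i) ∈ I := I.pow_mem_of_mem ha _ (by omega)
    exact I.mul_mem_right _ (I.mul_mem_left _ this)
  exact hrad ⟨n, hbn⟩
end
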